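/- arXiv:1806.02926 — 3 statements merged into one kernel-verified Lean document; each statement's English description precedes it below -/
import Mathlib

section
/- Continuity of a Pettis-integral in a parameter: let E be a quasi-complete locally convex Hausdorff space (or a Banach space), (X,Σ,μ) a measure space, T a metric space, and f : X × T → E such that (a) f(·,t) is Pettis-integrable on Σ for each t ∈ T, (b) f(x,·) is continuous at t₀ ∈ T for μ-a.e. x, and (c) there is a neighbourhood U of t₀ and a Pettis-integrable ψ on Σ such that for every t ∈ U and every e' ∈ E' one has |⟨e', f(x,t)⟩| ≤ |⟨e', ψ(x)⟩| for μ-a.e. x. Then for every Λ ∈ Σ the function g_Λ(t) := ∫_Λ f(x,t) dμ(x) is well-defined and continuous at t₀. -/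
/-!
A strongly measurable function takes its values, up to a null set, in a separable subset of `E`,
and on a separable set the norm is the supremum of `|e' ·|` over countably many norming functionals
`e'`. So the weak domination `|e' (f x t)| ≤ |e' (ψ x)|`, which holds off a null set depending on
`e'`, upgrades to the strong domination `‖f x t‖ ≤ ‖ψ x‖` almost everywhere, and continuity of the
integral at `t₀` follows from the dominated convergence theorem with the integrable bound `‖ψ‖`.
-/

open MeasureTheory

section NormingFunctionals

variable {𝕜 E : Type*} [RCLike 𝕜] [NormedAddCommGroup E] [NormedSpace 𝕜 E]

lemma norm_le_norm_apply_add_two_mul_norm_sub {g : StrongDual 𝕜 E} {y : E}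
    (hg : ‖g‖ ≤ 1) (hgy : g y = ‖y‖) (a : E) : ‖a‖ ≤ ‖g a‖ + 2 * ‖a - y‖ := by
  have hy : ‖y‖ ≤ ‖g a‖ + ‖a - y‖ :=
    calc ‖y‖ = ‖g y‖ := by simp [hgy]
      _ = ‖g a - g (a - y)‖ := by simp
      _ ≤ ‖g a‖ + ‖g (a - y)‖ := norm_sub_le _ _
      _ ≤ ‖g a‖ + ‖a - y‖ := by gcongr; simpa using g.le_of_opNorm_le hg (a - y)
  linarith [norm_le_insert' a y]

lemma norm_le_of_mem_closure_of_forall_norm_apply_le {d : Set E} {g : E → StrongDual 𝕜 E}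
    (hg : ∀ y ∈ d, ‖g y‖ ≤ 1 ∧ g y y = ‖y‖) {a : E} (ha : a ∈ closure d) {r : ℝ}
    (hr : ∀ y ∈ d, ‖g y a‖ ≤ r) : ‖a‖ ≤ r := by
  refine le_of_forall_pos_le_add fun ε hε => ?_
  obtain ⟨y, hyd, hay⟩ := Metric.mem_closure_iff.1 ha (ε / 2) (half_pos hε)
  have := norm_le_norm_apply_add_two_mul_norm_sub (hg y hyd).1 (hg y hyd).2 a
  rw [dist_eq_norm] at hay
  linarith [hr y hyd]

lemma ae_norm_le_of_forall_dual {X : Type*} [MeasurableSpace X] {μ : Measure X} {φ ψ : X → E}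
    (hφ : AEStronglyMeasurable φ μ) (h : ∀ e' : StrongDual 𝕜 E, ∀ᵐ x ∂μ, ‖e' (φ x)‖ ≤ ‖e' (ψ x)‖) :
    ∀ᵐ x ∂μ, ‖φ x‖ ≤ ‖ψ x‖ := by
  obtain ⟨t, ⟨d, hd_count, hd_dense⟩, hφt⟩ := hφ.isSeparable_ae_range
  choose g hg using fun y : E => exists_dual_vector'' 𝕜 y
  have hdom : ∀ᵐ x ∂μ, ∀ y ∈ d, ‖g y (φ x)‖ ≤ ‖g y (ψ x)‖ :=
    (ae_ball_iff hd_count).2 fun y _ => h (g y)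
  filter_upwards [hdom, hφt] with x hx hxt
  refine norm_le_of_mem_closure_of_forall_norm_apply_le (fun y _ => hg y) (hd_dense hxt)
    fun y hy => (hx y hy).trans ?_
  simpa using (g y).le_of_opNorm_le (hg y).1 _

end NormingFunctionals

theorem stmt5_general {X : Type*} [MeasurableSpace X] (μ : Measure X)
    {T : Type*} [MetricSpace T]
    {E : Type*} [NormedAddCommGroup E] [NormedSpace ℝ E]
    (f : X → T → E) (t₀ : T)
    (ha : ∀ t : T, Integrable (fun x => f x t) μ)
    (hb : ∀ᵐ x ∂μ, ContinuousAt (f x) t₀)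
    (hc : ∃ U ∈ nhds t₀, ∃ ψ : X → E, Integrable ψ μ ∧
      ∀ t ∈ U, ∀ e' : E →L[ℝ] ℝ, ∀ᵐ x ∂μ, |e' (f x t)| ≤ |e' (ψ x)|) :
    ∀ Λ : Set X, MeasurableSet Λ →
      ContinuousAt (fun t => ∫ x in Λ, f x t ∂μ) t₀ := by
  obtain ⟨U, hU, ψ, hψ, hdom⟩ := hc
  intro Λ _
  have hnorm : ∀ t ∈ U, ∀ᵐ x ∂μ, ‖f x t‖ ≤ ‖ψ x‖ := fun t ht =>
    ae_norm_le_of_forall_dual (𝕜 := ℝ) (ha t).aestronglyMeasurable (hdom t ht)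
  refine continuousAt_of_dominated (bound := fun x => ‖ψ x‖)
    (.of_forall fun t => (ha t).aestronglyMeasurable.restrict) ?_ hψ.norm.restrict
    (ae_restrict_of_ae hb)
  filter_upwards [hU] with t ht
  exact ae_restrict_of_ae (hnorm t ht)

/-- continuity of a (Bochner/Pettis) integral in a parameter under a
weak domination hypothesis via continuous linear functionals. -/
theorem stmt5 {X : Type*} [MeasurableSpace X] (μ : Measure X)
    {T : Type*} [MetricSpace T]
    {E : Type*} [NormedAddCommGroup E] [NormedSpace ℝ E] [CompleteSpace E]
    (f : X → T → E) (t₀ : T)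
    (ha : ∀ t : T, Integrable (fun x => f x t) μ)
    (hb : ∀ᵐ x ∂μ, ContinuousAt (f x) t₀)
    (hc : ∃ U ∈ nhds t₀, ∃ ψ : X → E, Integrable ψ μ ∧
      ∀ t ∈ U, ∀ e' : E →L[ℝ] ℝ, ∀ᵐ x ∂μ, |e' (f x t)| ≤ |e' (ψ x)|) :
    ∀ Λ : Set X, MeasurableSet Λ →
      ContinuousAt (fun t => ∫ x in Λ, f x t ∂μ) t₀ :=
  stmt5_general μ f t₀ ha hb hc
end

section
/- Approximation by regularisation in weighted C^k topology: let E be a quasi-complete locally convex Hausdorff space (or a Banach space), k ∈ ℕ₀ ∪ {∞}, Ω ⊂ ℝ^d open, V^k a locally bounded family of weights on Ω, and f ∈ C^k_c(Ω,E). Then (f∗ρ_n) → f in CV^k_0(Ω,E) as n → ∞; i.e. for all j, l, α: sup_{x∈Ω, |β|≤l} p_α(∂^β(f∗ρ_n − f)(x)) ν_{j,l}(x) → 0. -/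
open MeasureTheory
open scoped BigOperators

noncomputable def pD {d : ℕ} {E : Type*} [NormedAddCommGroup E] [NormedSpace ℝ E]
    (i : Fin d) (f : EuclideanSpace ℝ (Fin d) → E) : EuclideanSpace ℝ (Fin d) → E :=
  fun x => fderiv ℝ f x (EuclideanSpace.single i (1 : ℝ))

/-- Iterated partial derivative `∂^β f` for a multi-index `β : Fin d → ℕ`. -/
noncomputable def mD {d : ℕ} {E : Type*} [NormedAddCommGroup E] [NormedSpace ℝ E]
    (β : Fin d → ℕ) (f : EuclideanSpace ℝ (Fin d) → E) : EuclideanSpace ℝ (Fin d) → E :=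
  Fin.foldr d (fun i g => (pD i)^[β i] g) f

/-- The basic bump `x ↦ exp(−1/(1−|x|²))` for `|x| < 1`, `0` otherwise. -/
noncomputable def bump (d : ℕ) : EuclideanSpace ℝ (Fin d) → ℝ :=
  fun x => if ‖x‖ < 1 then Real.exp (-(1 - ‖x‖ ^ 2)⁻¹) else 0

/-- The normalising constant `C` with `∫ ρ = 1`. -/
noncomputable def bumpC (d : ℕ) : ℝ :=
  (∫ x in Metric.ball (0 : EuclideanSpace ℝ (Fin d)) 1, Real.exp (-(1 - ‖x‖ ^ 2)⁻¹))⁻¹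

/-- The mollifier `ρ` of the paper: `ρ(x) = C·exp(−1/(1−|x|²))` for `|x| < 1`. -/
noncomputable def rho (d : ℕ) : EuclideanSpace ℝ (Fin d) → ℝ :=
  fun x => bumpC d * bump d x

/-- The mollifier sequence `ρ_n(x) = n^d ρ(n x)`. -/
noncomputable def moll (d n : ℕ) : EuclideanSpace ℝ (Fin d) → ℝ :=
  fun x => (n : ℝ) ^ d * rho d ((n : ℝ) • x)

/-!
Partial derivatives commute with mollification on compactly supported `C¹` functions, so
`∂^β (f ∗ ρₙ - f) = (∂^β f) ∗ ρₙ - ∂^β f`, where `∂^β f` is continuous and supported in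
`tsupport f`. As `ρₙ ≥ 0` has integral `1` and support in the ball of radius `1/n`, uniform
continuity of `∂^β f` gives `(∂^β f) ∗ ρₙ → ∂^β f` uniformly, and once `1/n < δ` the difference
vanishes outside the closed `δ`-thickening of `tsupport f`. For small `δ` this thickening is a
compact subset of `Ω`, on which the weight is bounded; finitely many `β` have `|β| ≤ l`.
-/

open Set Filter Metric ContinuousLinearMap
open scoped Convolution

section Iterate

variable {α ι : Type*} {S : ℕ → Set α}

theorem mapsTo_iterate_of_succ {P : α → α} (hP : ∀ m, MapsTo P (S (m + 1)) (S m)) :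
    ∀ j m, MapsTo P^[j] (S (m + j)) (S m)
  | 0, _ => mapsTo_id _
  | j + 1, m => (mapsTo_iterate_of_succ hP j m).comp (hP (m + j))

theorem iterate_apply_comm_of_succ {P T : α → α} (hP : ∀ m, MapsTo P (S (m + 1)) (S m))
    (hPT : ∀ m, ∀ g ∈ S (m + 1), P (T g) = T (P g)) :
    ∀ j m, ∀ g ∈ S (m + j), P^[j] (T g) = T (P^[j] g)
  | 0, _, _, _ => rfl
  | j + 1, m, g, hg => by
    rw [Function.iterate_succ_apply, Function.iterate_succ_apply, hPT (m + j) g hg,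
      iterate_apply_comm_of_succ hP hPT j m (P g) (hP (m + j) hg)]

variable {P : ι → α → α} (β : ι → ℕ)

theorem mapsTo_foldr_iterate_of_succ (hP : ∀ i m, MapsTo (P i) (S (m + 1)) (S m)) :
    ∀ (L : List ι) m, MapsTo (fun g => L.foldr (fun i h => (P i)^[β i] h) g)
      (S (m + (L.map β).sum)) (S m)
  | [], _ => mapsTo_id _
  | i :: L, m => by
    refine (mapsTo_iterate_of_succ (hP i) (β i) m).comp ?_
    simpa [add_assoc] using mapsTo_foldr_iterate_of_succ hP L (m + β i)

theorem foldr_iterate_apply_comm_of_succ {T : α → α}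
    (hP : ∀ i m, MapsTo (P i) (S (m + 1)) (S m))
    (hPT : ∀ i m, ∀ g ∈ S (m + 1), P i (T g) = T (P i g)) :
    ∀ (L : List ι) m, ∀ g ∈ S (m + (L.map β).sum),
      L.foldr (fun i h => (P i)^[β i] h) (T g) = T (L.foldr (fun i h => (P i)^[β i] h) g)
  | [], _, _, _ => rfl
  | i :: L, m, g, hg => by
    have hg' : g ∈ S (m + β i + (L.map β).sum) := by simpa [add_assoc] using hg
    simp only [List.foldr_cons]
    rw [foldr_iterate_apply_comm_of_succ hP hPT L (m + β i) g hg']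
    exact iterate_apply_comm_of_succ (hP i) (hPT i) (β i) m _
      (mapsTo_foldr_iterate_of_succ β hP L (m + β i) hg')

end Iterate

section Mollifier

variable {d : ℕ}

theorem bump_eq_expNegInvGlue : bump d = fun x => expNegInvGlue (1 - ‖x‖ ^ 2) := by
  funext x
  have h1 : ‖x‖ < 1 ↔ ¬ 1 - ‖x‖ ^ 2 ≤ 0 := by
    rw [not_le, sub_pos, sq_lt_one_iff_abs_lt_one, abs_norm]
  by_cases hx : ‖x‖ < 1
  · simp [bump, expNegInvGlue, hx, h1.1 hx]
  · simp [bump, expNegInvGlue, hx, not_not.1 (mt h1.2 hx)]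

theorem continuous_bump : Continuous (bump d) := by
  rw [bump_eq_expNegInvGlue]
  exact (expNegInvGlue.contDiff (n := 0)).continuous.comp
    (continuous_const.sub (continuous_norm.pow 2))

theorem bump_nonneg (x : EuclideanSpace ℝ (Fin d)) : 0 ≤ bump d x := by
  rw [bump_eq_expNegInvGlue]
  exact expNegInvGlue.nonneg _

theorem bump_eq_zero_of_one_le_norm {x : EuclideanSpace ℝ (Fin d)} (hx : 1 ≤ ‖x‖) :
    bump d x = 0 := by
  simp [bump, not_lt.2 hx]

theorem support_bump : Function.support (bump d) = ball 0 1 := by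
  ext x
  rw [mem_ball_zero_iff, Function.mem_support]
  refine ⟨fun h => not_le.1 (mt bump_eq_zero_of_one_le_norm h), fun hx => ?_⟩
  simp only [bump, hx, if_true]
  exact (Real.exp_pos _).ne'

theorem integral_bump_pos : 0 < ∫ x, bump d x := by
  have hint : Integrable (bump d) :=
    continuous_bump.integrable_of_hasCompactSupport <| HasCompactSupport.intro
      (isCompact_closedBall 0 1) fun x hx => bump_eq_zero_of_one_le_norm <| by
        simpa using (not_le.1 (mt mem_closedBall_zero_iff.2 hx)).le
  rw [integral_pos_iff_support_of_nonneg bump_nonneg hint, support_bump]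
  exact measure_ball_pos _ _ one_pos

theorem bumpC_eq_inv_integral : bumpC d = (∫ x, bump d x)⁻¹ := by
  rw [bumpC, ← setIntegral_eq_integral_of_forall_compl_eq_zero fun x hx =>
    bump_eq_zero_of_one_le_norm (not_lt.1 (mt mem_ball_zero_iff.2 hx))]
  congr 1
  refine setIntegral_congr_fun measurableSet_ball fun x hx => ?_
  simp [bump, mem_ball_zero_iff.1 hx]

theorem integral_rho : ∫ x, rho d x = 1 := by
  simp only [rho]
  rw [integral_const_mul, bumpC_eq_inv_integral]
  exact inv_mul_cancel₀ integral_bump_pos.ne'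

theorem moll_nonneg (n : ℕ) (x : EuclideanSpace ℝ (Fin d)) : 0 ≤ moll d n x :=
  mul_nonneg (by positivity) <| mul_nonneg
    (by rw [bumpC_eq_inv_integral]; exact inv_nonneg.2 integral_bump_pos.le) (bump_nonneg _)

theorem continuous_moll (n : ℕ) : Continuous (moll d n) :=
  continuous_const.mul <| (continuous_const.mul continuous_bump).comp (continuous_const_smul _)

theorem integral_moll {n : ℕ} (hn : 0 < n) : ∫ x, moll d n x = 1 := by
  have hn' : (0 : ℝ) < n := Nat.cast_pos.2 hn
  simp only [moll]
  rw [integral_const_mul, Measure.integral_comp_smul, finrank_euclideanSpace_fin,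
    integral_rho, smul_eq_mul, mul_one, abs_of_pos (by positivity), ← inv_pow, ← mul_pow,
    mul_inv_cancel₀ hn'.ne', one_pow]

theorem support_moll_subset {n : ℕ} (hn : 0 < n) :
    Function.support (moll d n) ⊆ closedBall 0 (n : ℝ)⁻¹ := by
  intro x hx
  have hx' : (n : ℝ) • x ∈ ball 0 1 := by
    rw [← support_bump]
    exact fun h => hx (by simp [moll, rho, h])
  have hn' : (0 : ℝ) < n := Nat.cast_pos.2 hn
  rw [mem_ball_zero_iff, norm_smul, Real.norm_natCast] at hx'
  rw [mem_closedBall_zero_iff, ← one_div, le_div_iff₀ hn', mul_comm]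
  exact hx'.le

end Mollifier

section PartialDeriv

variable {d : ℕ} {E : Type*} [NormedAddCommGroup E] [NormedSpace ℝ E]

theorem contDiff_pD {m : ℕ} {g : EuclideanSpace ℝ (Fin d) → E} (hg : ContDiff ℝ (m + 1 : ℕ) g)
    (i : Fin d) : ContDiff ℝ m (pD i g) :=
  (hg.fderiv_right (by norm_cast)).clm_apply contDiff_const

theorem tsupport_pD_subset (i : Fin d) (g : EuclideanSpace ℝ (Fin d) → E) :
    tsupport (pD i g) ⊆ tsupport g :=
  closure_minimal (fun x hx => support_fderiv_subset ℝ fun h => hx (by simp [pD, h]))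
    (isClosed_tsupport g)

theorem pD_sub {g h : EuclideanSpace ℝ (Fin d) → E} (hg : Differentiable ℝ g)
    (hh : Differentiable ℝ h) (i : Fin d) :
    pD i (fun z => g z - h z) = fun z => pD i g z - pD i h z := by
  funext x
  simp [pD, fderiv_fun_sub (hg x) (hh x)]

theorem pD_convolution {φ : EuclideanSpace ℝ (Fin d) → ℝ} {g : EuclideanSpace ℝ (Fin d) → E}
    (hφ : LocallyIntegrable φ) (hg : ContDiff ℝ 1 g) (hgc : HasCompactSupport g) (i : Fin d) :
    pD i (φ ⋆[lsmul ℝ ℝ] g) = φ ⋆[lsmul ℝ ℝ] pD i g := by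
  funext x
  rw [pD, (hgc.hasFDerivAt_convolution_right _ hφ hg x).fderiv,
    convolution_precompR_apply _ hφ (hgc.fderiv ℝ) (hg.continuous_fderiv one_ne_zero)]
  rfl

theorem pD_mollify_sub (n : ℕ) {g : EuclideanSpace ℝ (Fin d) → E} (hg : ContDiff ℝ 1 g)
    (hgc : HasCompactSupport g) (i : Fin d) :
    pD i (fun z => (moll d n ⋆[lsmul ℝ ℝ] g) z - g z)
      = fun z => (moll d n ⋆[lsmul ℝ ℝ] pD i g) z - pD i g z := by
  have hφ := (continuous_moll (d := d) n).locallyIntegrable (μ := volume)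
  rw [pD_sub ((hgc.contDiff_convolution_right _ hφ hg).differentiable one_ne_zero)
    (hg.differentiable one_ne_zero), pD_convolution hφ hg hgc]

variable (E) in
def contDiffSupportedIn (K : Set (EuclideanSpace ℝ (Fin d))) (m : ℕ) :
    Set (EuclideanSpace ℝ (Fin d) → E) :=
  {g | ContDiff ℝ m g ∧ tsupport g ⊆ K}

theorem mapsTo_pD (K : Set (EuclideanSpace ℝ (Fin d))) (i : Fin d) (m : ℕ) :
    MapsTo (pD i) (contDiffSupportedIn E K (m + 1)) (contDiffSupportedIn E K m) :=
  fun g hg => ⟨contDiff_pD hg.1 i, (tsupport_pD_subset i g).trans hg.2⟩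

theorem mD_eq_foldr (β : Fin d → ℕ) (g : EuclideanSpace ℝ (Fin d) → E) :
    mD β g = (List.finRange d).foldr (fun i h => (pD i)^[β i] h) g := by
  rw [mD, Fin.foldr_eq_foldr_finRange]

theorem mapsTo_mD (K : Set (EuclideanSpace ℝ (Fin d))) (β : Fin d → ℕ) (m : ℕ) :
    MapsTo (mD β) (contDiffSupportedIn E K (m + ∑ i, β i)) (contDiffSupportedIn E K m) := by
  rw [funext (mD_eq_foldr (E := E) β), Fin.sum_univ_def]
  exact mapsTo_foldr_iterate_of_succ β (mapsTo_pD K) (List.finRange d) m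

theorem mD_mollify_sub (n : ℕ) (β : Fin d → ℕ) {g : EuclideanSpace ℝ (Fin d) → E}
    (hg : ContDiff ℝ (∑ i, β i : ℕ) g) (hgc : HasCompactSupport g) :
    mD β (fun z => (moll d n ⋆[lsmul ℝ ℝ] g) z - g z)
      = fun z => (moll d n ⋆[lsmul ℝ ℝ] mD β g) z - mD β g z := by
  simp only [mD_eq_foldr]
  refine foldr_iterate_apply_comm_of_succ β (mapsTo_pD (tsupport g))
    (fun i m h hh => pD_mollify_sub n (hh.1.of_le (by norm_cast; omega))
      (hgc.mono' ((subset_tsupport h).trans hh.2)) i) (List.finRange d) 0 g ?_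
  simpa [contDiffSupportedIn, Fin.sum_univ_def] using hg

end PartialDeriv

section Convergence

variable {d : ℕ} {E : Type*} [NormedAddCommGroup E] [NormedSpace ℝ E] [CompleteSpace E]

theorem dist_mollify_le {n : ℕ} (hn : 0 < n) {g : EuclideanSpace ℝ (Fin d) → E}
    (hg : AEStronglyMeasurable g) {x : EuclideanSpace ℝ (Fin d)} {z : E} {R ε : ℝ}
    (hR : (n : ℝ)⁻¹ < R) (hε : 0 ≤ ε) (h : ∀ y ∈ ball x R, dist (g y) z ≤ ε) :
    dist ((moll d n ⋆[lsmul ℝ ℝ] g) x) z ≤ ε :=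
  dist_convolution_le hε ((support_moll_subset hn).trans (closedBall_subset_ball hR))
    (moll_nonneg n) (integral_moll hn) hg h

theorem mollify_eq_zero_of_notMem_thickening {n : ℕ} (hn : 0 < n)
    {g : EuclideanSpace ℝ (Fin d) → E} (hg : AEStronglyMeasurable g) {δ : ℝ}
    (hδ : (n : ℝ)⁻¹ < δ) {x : EuclideanSpace ℝ (Fin d)} (hx : x ∉ thickening δ (tsupport g)) :
    (moll d n ⋆[lsmul ℝ ℝ] g) x = 0 := by
  refine dist_le_zero.1 (dist_mollify_le hn hg hδ le_rfl fun y hy => ?_)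
  have hy' : y ∉ tsupport g := fun hyg => hx (mem_thickening_iff.2 ⟨y, hyg, mem_ball'.1 hy⟩)
  rw [image_eq_zero_of_notMem_tsupport hy', dist_self]

theorem tendstoUniformly_mollify {g : EuclideanSpace ℝ (Fin d) → E} (hg : UniformContinuous g) :
    TendstoUniformly (fun n => moll d n ⋆[lsmul ℝ ℝ] g) g atTop := by
  rw [Metric.tendstoUniformly_iff]
  intro ε hε
  obtain ⟨δ, hδ, hgδ⟩ := Metric.uniformContinuous_iff.1 hg (ε / 2) (half_pos hε)
  filter_upwards [eventually_gt_atTop 0,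
    tendsto_inv_atTop_nhds_zero_nat.eventually (gt_mem_nhds hδ)] with n hn hnδ x
  rw [dist_comm]
  exact (dist_mollify_le hn hg.continuous.aestronglyMeasurable hnδ (half_pos hε).le
    fun y hy => (hgδ hy).le).trans_lt (half_lt_self hε)

theorem eventually_norm_mollify_sub_mul_le {g : EuclideanSpace ℝ (Fin d) → E}
    (hg : Continuous g) (hgc : HasCompactSupport g) {s : Set (EuclideanSpace ℝ (Fin d))}
    (hgs : tsupport g ⊆ s) {δ : ℝ} (hδ : 0 < δ) {w : EuclideanSpace ℝ (Fin d) → ℝ} {M : ℝ}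
    (hw : ∀ x ∈ cthickening δ s, w x ≤ M) {ε : ℝ} (hε : 0 < ε) :
    ∀ᶠ n in atTop, ∀ x, ‖(moll d n ⋆[lsmul ℝ ℝ] g) x - g x‖ * w x ≤ ε := by
  have hM : 0 < max M 1 := lt_max_of_lt_right one_pos
  have hunif := tendstoUniformly_mollify
    (hg.uniformContinuous_of_tendsto_cocompact hgc.is_zero_at_infty)
  filter_upwards [eventually_gt_atTop 0,
    tendsto_inv_atTop_nhds_zero_nat.eventually (gt_mem_nhds hδ),
    Metric.tendstoUniformly_iff.1 hunif (ε / max M 1) (div_pos hε hM)] with n hn hnδ hclose x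
  by_cases hx : x ∈ cthickening δ s
  · calc ‖(moll d n ⋆[lsmul ℝ ℝ] g) x - g x‖ * w x
        ≤ ‖(moll d n ⋆[lsmul ℝ ℝ] g) x - g x‖ * max M 1 :=
          mul_le_mul_of_nonneg_left ((hw x hx).trans (le_max_left _ _)) (norm_nonneg _)
      _ ≤ ε / max M 1 * max M 1 := by
          gcongr
          rw [← dist_eq_norm, dist_comm]
          exact (hclose x).le
      _ = ε := div_mul_cancel₀ ε hM.ne'
  · have hxg : x ∉ tsupport g := fun h => hx (self_subset_cthickening _ (hgs h))
    have hxg' : x ∉ thickening δ (tsupport g) := fun h =>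
      hx (cthickening_subset_of_subset δ hgs (thickening_subset_cthickening _ _ h))
    rw [mollify_eq_zero_of_notMem_thickening hn hg.aestronglyMeasurable hnδ hxg',
      image_eq_zero_of_notMem_tsupport hxg, sub_zero, norm_zero, zero_mul]
    exact hε.le

end Convergence

theorem finite_setOf_sum_le {ι : Type*} [Fintype ι] [DecidableEq ι] (l : ℕ) :
    {β : ι → ℕ | ∑ i, β i ≤ l}.Finite :=
  (finite_Iic fun _ => l).subset fun β hβ i =>
    (Finset.single_le_sum (fun j _ => Nat.zero_le (β j)) (Finset.mem_univ i)).trans hβ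

theorem stmt12_general {d : ℕ} {E : Type*} [NormedAddCommGroup E] [NormedSpace ℝ E]
    [CompleteSpace E] {J : Type*} (k : ℕ∞)
    (Ω : Set (EuclideanSpace ℝ (Fin d))) (hΩ : IsOpen Ω)
    (ν : J → ℕ → EuclideanSpace ℝ (Fin d) → ℝ)
    (hν_locbdd : ∀ K : Set (EuclideanSpace ℝ (Fin d)), K ⊆ Ω → IsCompact K →
      ∀ (j : J) (l : ℕ), ∃ M : ℝ, ∀ x ∈ K, ν j l x ≤ M)
    (f : EuclideanSpace ℝ (Fin d) → E)
    (hf : ContDiff ℝ k f) (hfc : HasCompactSupport f) (hfs : tsupport f ⊆ Ω) :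
    ∀ (j : J) (l : ℕ), (l : ℕ∞) ≤ k → ∀ ε > (0:ℝ), ∃ N : ℕ, ∀ n ≥ N,
      ∀ x ∈ Ω, ∀ β : Fin d → ℕ, (∑ i, β i) ≤ l →
        ‖mD β (fun z => (∫ y, moll d n (z - y) • f y) - f z) x‖ * ν j l x ≤ ε := by
  intro j l hlk ε hε
  obtain ⟨δ, hδ, hδΩ⟩ := hfc.exists_cthickening_subset_open hΩ hfs
  obtain ⟨M, hM⟩ := hν_locbdd _ hδΩ hfc.cthickening j l
  have hfl : ContDiff ℝ l f := hf.of_le (by exact_mod_cast hlk)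
  have hconv : ∀ n, (fun z => (∫ y, moll d n (z - y) • f y) - f z)
      = fun z => (moll d n ⋆[lsmul ℝ ℝ] f) z - f z := fun n =>
    funext fun z => by rw [convolution_lsmul_swap]
  have hβ : ∀ β ∈ {β : Fin d → ℕ | ∑ i, β i ≤ l}, ∀ᶠ n in atTop,
      ∀ x, ‖mD β (fun z => (∫ y, moll d n (z - y) • f y) - f z) x‖ * ν j l x ≤ ε := by
    intro β hβl
    have hfβ : ContDiff ℝ (∑ i, β i : ℕ) f := hfl.of_le (by exact_mod_cast hβl)
    obtain ⟨hgβ, hgβs⟩ := mapsTo_mD (tsupport f) β 0 ⟨by simpa using hfβ, subset_rfl⟩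
    simp only [hconv, mD_mollify_sub _ β hfβ hfc]
    exact eventually_norm_mollify_sub_mul_le hgβ.continuous
      (hfc.mono' ((subset_tsupport _).trans hgβs)) hgβs hδ hM hε
  obtain ⟨N, hN⟩ := eventually_atTop.1 ((eventually_all_finite (finite_setOf_sum_le l)).2 hβ)
  exact ⟨N, fun n hn x _ β hβl => hN n hn β hβl x⟩

/-- approximation by regularisation: for a compactly supported `C^k`
function `f` (extended by zero outside `Ω`), the mollifications `f ∗ ρ_n` converge
to `f` in the weighted topology of `CV^k_0(Ω,E)`, provided the weights are locally
bounded. -/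
theorem stmt12 {d : ℕ} {E : Type*} [NormedAddCommGroup E] [NormedSpace ℝ E]
    [CompleteSpace E] {J : Type*} (k : ℕ∞)
    (Ω : Set (EuclideanSpace ℝ (Fin d))) (hΩ : IsOpen Ω)
    (ν : J → ℕ → EuclideanSpace ℝ (Fin d) → ℝ)
    (hν_nonneg : ∀ j l x, 0 ≤ ν j l x)
    (hν_locbdd : ∀ K : Set (EuclideanSpace ℝ (Fin d)), K ⊆ Ω → IsCompact K →
      ∀ (j : J) (l : ℕ), ∃ M : ℝ, ∀ x ∈ K, ν j l x ≤ M)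
    (f : EuclideanSpace ℝ (Fin d) → E)
    (hf : ContDiff ℝ k f) (hfc : HasCompactSupport f) (hfs : tsupport f ⊆ Ω) :
    ∀ (j : J) (l : ℕ), (l : ℕ∞) ≤ k → ∀ ε > (0:ℝ), ∃ N : ℕ, ∀ n ≥ N,
      ∀ x ∈ Ω, ∀ β : Fin d → ℕ, (∑ i, β i) ≤ l →
        ‖mD β (fun z => (∫ y, moll d n (z - y) • f y) - f z) x‖ * ν j l x ≤ ε :=
  stmt12_general k Ω hΩ ν hν_locbdd f hf hfc hfs
end

section
/- Partition-of-unity approximation of continuous functions in weighted sup-norms: let E be a locally convex Hausdorff space (or a Banach space), Ω a locally compact Hausdorff space, ν : Ω → [0,∞) locally bounded, f : Ω → E continuous, K ⊂ Ω compact with sup_{x∈Ω\K} p_α(f(x)) ν(x) < ε. Then there exist n ∈ ℕ, points x₁,…,x_n ∈ K and nonnegative continuous compactly supported functions φ₁,…,φ_n with Σφ_i = 1 on K and Σφ_i ≤ 1 everywhere, such that g := Σ_{i=1}^n φ_i · f(x_i) satisfies sup_{x∈Ω} p_α(f(x) − g(x)) ν(x) < 4ε. -/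
/-!
Cover `K` by finitely many open sets inside a compact neighbourhood `L` of `K`, on each of which
`f` oscillates by less than `δ = ε / (|M| + 1)`, where `ν ≤ M` on `L`, and take a partition of
unity `φ` subordinate to this cover. Writing `s = Σ φ_i`,
`f - g = (1 - s) • f + Σ φ_i • (f - f(x_i))`. The first term vanishes on `K` and is weighted by
at most `c < ε` off `K`; the second has norm at most `s δ`, and `s` vanishes off `L`, so its
weighted norm is at most `δ |M| < ε`. This even gives the bound `2ε`.
-/

open Set Topology

theorem IsCompact.exists_fin_subcover {X : Type*} [TopologicalSpace X] {K : Set X}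
    (hK : IsCompact K) (U : X → Set X) (hU : ∀ x ∈ K, U x ∈ 𝓝 x) :
    ∃ (n : ℕ) (x : Fin n → X), (∀ i, x i ∈ K) ∧ K ⊆ ⋃ i, U (x i) := by
  obtain ⟨t, htK, hcover⟩ := hK.elim_nhds_subcover U hU
  refine ⟨t.card, fun i => t.equivFin.symm i, fun i => htK _ (t.equivFin.symm i).2, ?_⟩
  intro z hz
  obtain ⟨y, hyt, hzy⟩ := mem_iUnion₂.mp (hcover hz)
  exact mem_iUnion.mpr ⟨t.equivFin ⟨y, hyt⟩, by simpa using hzy⟩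

theorem exists_partitionOfUnity_fin_dist_lt {X Y : Type*} [TopologicalSpace X]
    [LocallyCompactSpace X] [T2Space X] [PseudoMetricSpace Y] {f : X → Y} (hf : Continuous f)
    {K U : Set X} (hK : IsCompact K) (hU : IsOpen U) (hKU : K ⊆ U) {δ : ℝ} (hδ : 0 < δ) :
    ∃ (n : ℕ) (x : Fin n → X) (p : PartitionOfUnity (Fin n) X K),
      (∀ i, x i ∈ K) ∧ (∀ i, HasCompactSupport (p i)) ∧
      (∀ i, tsupport (p i) ⊆ U) ∧ ∀ i, ∀ z ∈ tsupport (p i), dist (f z) (f (x i)) < δ := by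
  set V : X → Set X := fun y => U ∩ {z | dist (f z) (f y) < δ}
  have hVopen : ∀ y, IsOpen (V y) := fun y =>
    hU.inter (isOpen_lt (hf.dist continuous_const) continuous_const)
  obtain ⟨n, x, hxK, hcover⟩ := hK.exists_fin_subcover V fun y hy =>
    (hVopen y).mem_nhds ⟨hKU hy, by simpa using hδ⟩
  obtain ⟨p, hpV, hpc⟩ := PartitionOfUnity.exists_isSubordinate_of_locallyFinite_t2space hK
    (fun i => V (x i)) (fun i => hVopen _) (locallyFinite_of_finite _) hcover
  exact ⟨n, x, p, hxK, hpc, fun i => (hpV i).trans inter_subset_left, fun i z hz => (hpV i hz).2⟩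

theorem norm_sub_sum_smul_le {ι E : Type*} [SeminormedAddCommGroup E] [NormedSpace ℝ E]
    (s : Finset ι) {w : ι → ℝ} (hw : ∀ i, 0 ≤ w i) {v : E} {u : ι → E} {δ : ℝ}
    (hu : ∀ i, w i ≠ 0 → ‖v - u i‖ ≤ δ) :
    ‖v - ∑ i ∈ s, w i • u i‖ ≤ |1 - ∑ i ∈ s, w i| * ‖v‖ + (∑ i ∈ s, w i) * δ := by
  have hsplit : v - ∑ i ∈ s, w i • u i
      = (1 - ∑ i ∈ s, w i) • v + ∑ i ∈ s, w i • (v - u i) := by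
    simp only [smul_sub, sub_smul, one_smul, Finset.sum_sub_distrib, Finset.sum_smul]
    abel
  have hterm : ∀ i, ‖w i • (v - u i)‖ ≤ w i * δ := fun i => by
    rw [norm_smul, Real.norm_of_nonneg (hw i)]
    rcases eq_or_ne (w i) 0 with h | h
    · simp [h]
    · exact mul_le_mul_of_nonneg_left (hu i h) (hw i)
  calc ‖v - ∑ i ∈ s, w i • u i‖
      ≤ ‖(1 - ∑ i ∈ s, w i) • v‖ + ‖∑ i ∈ s, w i • (v - u i)‖ := hsplit ▸ norm_add_le _ _
    _ ≤ |1 - ∑ i ∈ s, w i| * ‖v‖ + ∑ i ∈ s, w i * δ := by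
      rw [norm_smul, Real.norm_eq_abs]
      gcongr
      exact (norm_sum_le _ _).trans (Finset.sum_le_sum fun i _ => hterm i)
    _ = |1 - ∑ i ∈ s, w i| * ‖v‖ + (∑ i ∈ s, w i) * δ := by rw [Finset.sum_mul]

theorem PartitionOfUnity.sum_mul_le_of_tsupport_subset {ι X : Type*} [Fintype ι]
    [TopologicalSpace X] {S L : Set X} (p : PartitionOfUnity ι X S)
    (hpL : ∀ i, tsupport (p i) ⊆ L) {g : X → ℝ} (hg : ∀ z, 0 ≤ g z) {M : ℝ} (hM₀ : 0 ≤ M)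
    (hM : ∀ z ∈ L, g z ≤ M) (z : X) : (∑ i, p i z) * g z ≤ M := by
  rcases eq_or_ne (∑ i, p i z) 0 with h | h
  · simpa [h] using hM₀
  obtain ⟨i, -, hi⟩ := Finset.exists_ne_zero_of_sum_ne_zero h
  have hsum_le : ∑ i, p i z ≤ 1 := by simpa [finsum_eq_sum_of_fintype] using p.sum_le_one z
  calc (∑ i, p i z) * g z ≤ 1 * M :=
        mul_le_mul hsum_le (hM z (hpL i (subset_tsupport _ hi))) (hg z) zero_le_one
    _ = M := one_mul M

/-- partition-of-unity approximation of a continuous function in a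
weighted sup-norm: outside a compact `K` the weighted norm of `f` is `< ε` (i.e.
there is `c < ε` dominating it), and then `f` is `4ε`-approximated by a finite sum
`Σ φ_i • f(x_i)` with `x_i ∈ K` and a subordinate family of nonnegative compactly
supported continuous functions with `Σ φ_i = 1` on `K` and `Σ φ_i ≤ 1` everywhere. -/
theorem stmt17 {Ω : Type*} [TopologicalSpace Ω] [LocallyCompactSpace Ω] [T2Space Ω]
    {E : Type*} [NormedAddCommGroup E] [NormedSpace ℝ E]
    (ν : Ω → ℝ) (hν_nonneg : ∀ x, 0 ≤ ν x)
    (hν_locbdd : ∀ K : Set Ω, IsCompact K → ∃ M : ℝ, ∀ x ∈ K, ν x ≤ M)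
    (f : Ω → E) (hf : Continuous f)
    (K : Set Ω) (hK : IsCompact K) (ε : ℝ) (hε : 0 < ε)
    (hout : ∃ c : ℝ, c < ε ∧ ∀ x ∉ K, ‖f x‖ * ν x ≤ c) :
    ∃ (n : ℕ) (x : Fin n → Ω) (φ : Fin n → Ω → ℝ),
      (∀ i, x i ∈ K) ∧
      (∀ i, Continuous (φ i) ∧ HasCompactSupport (φ i) ∧ ∀ z, 0 ≤ φ i z) ∧
      (∀ z ∈ K, ∑ i, φ i z = 1) ∧
      (∀ z, ∑ i, φ i z ≤ 1) ∧
      ∀ z, ‖f z - ∑ i, φ i z • f (x i)‖ * ν z < 4 * ε := by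
  obtain ⟨c, hc, hcout⟩ := hout
  obtain ⟨L, hL, hKL⟩ := exists_compact_superset hK
  obtain ⟨M, hM⟩ := hν_locbdd L hL
  set δ := ε / (|M| + 1)
  have hδ : 0 < δ := by positivity
  have hδM : δ * |M| < ε := by
    rw [div_mul_eq_mul_div, div_lt_iff₀ (by positivity)]
    nlinarith
  obtain ⟨n, x, p, hxK, hpc, hpL, hposc⟩ :=
    exists_partitionOfUnity_fin_dist_lt hf hK isOpen_interior hKL hδ
  have hsum_eq z (hz : z ∈ K) : ∑ i, p i z = 1 := by
    simpa [finsum_eq_sum_of_fintype] using p.sum_eq_one hz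
  have hsum_le z : ∑ i, p i z ≤ 1 := by simpa [finsum_eq_sum_of_fintype] using p.sum_le_one z
  refine ⟨n, x, fun i => p i, hxK, fun i => ⟨(p i).continuous, hpc i, p.nonneg i⟩,
    hsum_eq, hsum_le, fun z => ?_⟩
  set s := ∑ i, p i z
  have hnorm : ‖f z - ∑ i, p i z • f (x i)‖ ≤ (1 - s) * ‖f z‖ + s * δ := by
    have := norm_sub_sum_smul_le Finset.univ (p.nonneg · z) (v := f z) (u := f ∘ x) (δ := δ)
      fun i hi => (dist_eq_norm (f z) (f (x i)) ▸ hposc i z (subset_tsupport _ hi)).le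
    rwa [abs_of_nonneg (sub_nonneg.mpr (hsum_le z))] at this
  have hoff_K : (1 - s) * ‖f z‖ * ν z < ε := by
    by_cases hz : z ∈ K
    · simpa [s, hsum_eq z hz] using hε
    · have hs : 0 ≤ s := Finset.sum_nonneg fun i _ => p.nonneg i z
      have hfν := hcout z hz
      have : 0 ≤ ‖f z‖ * ν z := mul_nonneg (norm_nonneg _) (hν_nonneg z)
      nlinarith
  have hoff_L : s * ν z ≤ |M| :=
    p.sum_mul_le_of_tsupport_subset (fun i => (hpL i).trans interior_subset) hν_nonneg
      (abs_nonneg M) (fun z hz => (hM z hz).trans (le_abs_self M)) z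
  calc ‖f z - ∑ i, p i z • f (x i)‖ * ν z ≤ ((1 - s) * ‖f z‖ + s * δ) * ν z :=
        mul_le_mul_of_nonneg_right hnorm (hν_nonneg z)
    _ = (1 - s) * ‖f z‖ * ν z + δ * (s * ν z) := by ring
    _ < 4 * ε := by nlinarith
end
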